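/- Let m(u) = f + g·u + (1/2)u·H·u + (σ/3)‖u‖³ with σ > 0 and δ ∈ (0, 1/6). If u satisfies ‖∇m(u)‖ ≤ δ σ ‖u‖² and u·H·u ≥ -σ‖u‖³, then m(0) - m(u) ≥ (1/6 - δ) σ ‖u‖³. -/

import Mathlib

/-!
Pairing the gradient `∇m(u) = g + H u + σ‖u‖u` with `u` eliminates the linear term:
`m(0) - m(u) = -⟨∇m(u), u⟩ + ½⟨u, Hu⟩ + ⅔σ‖u‖³`. By Cauchy–Schwarz the first term is at least
`-δσ‖u‖³`, and the curvature condition bounds the second below by `-½σ‖u‖³`.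
-/

open Matrix Real BigOperators RealInnerProductSpace

/-- Euclidean norm of a finite-dimensional real vector. -/
noncomputable def eunorm {ι : Type*} [Fintype ι] (x : ι → ℝ) : ℝ :=
  Real.sqrt (∑ i, x i ^ 2)

/-- ℓ¹ norm of a finite-dimensional real vector. -/
noncomputable def l1norm {ι : Type*} [Fintype ι] (x : ι → ℝ) : ℝ :=
  ∑ i, |x i|

section

variable {ι : Type*} [Fintype ι]

lemma eunorm_eq_norm_toLp (x : ι → ℝ) : eunorm x = ‖WithLp.toLp 2 x‖ := by
  simp [eunorm, EuclideanSpace.norm_eq]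

lemma eunorm_nonneg (x : ι → ℝ) : 0 ≤ eunorm x :=
  Real.sqrt_nonneg _

@[simp]
lemma eunorm_zero : eunorm (0 : ι → ℝ) = 0 := by
  simp [eunorm]

lemma eunorm_sq (x : ι → ℝ) : eunorm x ^ 2 = x ⬝ᵥ x := by
  rw [eunorm, Real.sq_sqrt (Finset.sum_nonneg fun i _ => sq_nonneg _)]
  simp [dotProduct, sq]

lemma abs_dotProduct_le_eunorm_mul_eunorm (x y : ι → ℝ) :
    |x ⬝ᵥ y| ≤ eunorm x * eunorm y := by
  have h := abs_real_inner_le_norm (WithLp.toLp 2 y) (WithLp.toLp 2 x)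
  rwa [EuclideanSpace.inner_toLp_toLp, star_trivial, mul_comm, ← eunorm_eq_norm_toLp,
    ← eunorm_eq_norm_toLp] at h

noncomputable def cubicModel (f σ : ℝ) (g : ι → ℝ) (H : Matrix ι ι ℝ) (d : ι → ℝ) : ℝ :=
  f + g ⬝ᵥ d + (1 / 2) * (d ⬝ᵥ H *ᵥ d) + (σ / 3) * eunorm d ^ 3

lemma cubicModel_zero_sub (f σ : ℝ) (g : ι → ℝ) (H : Matrix ι ι ℝ) (u : ι → ℝ) :
    cubicModel f σ g H 0 - cubicModel f σ g H u =
      -((g + H *ᵥ u + (σ * eunorm u) • u) ⬝ᵥ u) + (1 / 2) * (u ⬝ᵥ H *ᵥ u)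
        + (2 / 3) * σ * eunorm u ^ 3 := by
  simp only [cubicModel, add_dotProduct, smul_dotProduct, dotProduct_comm (H *ᵥ u) u,
    ← eunorm_sq, smul_eq_mul, dotProduct_zero, mulVec_zero, eunorm_zero]
  ring

end

theorem stmt1_general {n : ℕ} (f σ δ : ℝ) (g u : Fin n → ℝ) (H : Matrix (Fin n) (Fin n) ℝ)
    (m : (Fin n → ℝ) → ℝ)
    (hm : ∀ d, m d = f + g ⬝ᵥ d + (1 / 2) * (d ⬝ᵥ H.mulVec d) + (σ / 3) * (eunorm d) ^ 3)
    (hgrad : eunorm (g + H.mulVec u + (σ * eunorm u) • u) ≤ δ * σ * (eunorm u) ^ 2)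
    (hcurv : u ⬝ᵥ H.mulVec u ≥ -(σ * (eunorm u) ^ 3)) :
    m 0 - m u ≥ (1 / 6 - δ) * σ * (eunorm u) ^ 3 := by
  have hm_eq : m = cubicModel f σ g H := funext hm
  have hgrad_pair : (g + H *ᵥ u + (σ * eunorm u) • u) ⬝ᵥ u ≤ δ * σ * eunorm u ^ 3 :=
    calc _ ≤ eunorm (g + H *ᵥ u + (σ * eunorm u) • u) * eunorm u :=
          (le_abs_self _).trans (abs_dotProduct_le_eunorm_mul_eunorm _ _)
      _ ≤ δ * σ * eunorm u ^ 2 * eunorm u :=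
          mul_le_mul_of_nonneg_right hgrad (eunorm_nonneg u)
      _ = δ * σ * eunorm u ^ 3 := by ring
  rw [hm_eq, cubicModel_zero_sub]
  linarith

theorem stmt1 {n : ℕ} (f σ δ : ℝ) (g u : Fin n → ℝ) (H : Matrix (Fin n) (Fin n) ℝ)
    (hH : H.IsSymm) (hσ : 0 < σ) (hδ0 : 0 < δ) (hδ1 : δ < 1 / 6)
    (m : (Fin n → ℝ) → ℝ)
    (hm : ∀ d, m d = f + g ⬝ᵥ d + (1 / 2) * (d ⬝ᵥ H.mulVec d) + (σ / 3) * (eunorm d) ^ 3)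
    (hgrad : eunorm (g + H.mulVec u + (σ * eunorm u) • u) ≤ δ * σ * (eunorm u) ^ 2)
    (hcurv : u ⬝ᵥ H.mulVec u ≥ -(σ * (eunorm u) ^ 3)) :
    m 0 - m u ≥ (1 / 6 - δ) * σ * (eunorm u) ^ 3 :=
  stmt1_general f σ δ g u H m hm hgrad hcurv
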